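/- Let X and Y be real Banach spaces and Z = X ⊕_p Y with 1 ≤ p < ∞. If X has the Ball Small Combination of Slices Property (BSCSP) or Y has BSCSP, then Z has BSCSP. -/

import Mathlib

open Metric Topology
open scoped ENNReal

noncomputable section

/-- The ballSlice of the closed unit ball of `X` determined by the functional `f` and `α`. -/
def ballSlice (X : Type*) [NormedAddCommGroup X] [NormedSpace ℝ X]
    (f : X →L[ℝ] ℝ) (α : ℝ) : Set X :=
  {x ∈ closedBall (0 : X) 1 | 1 - α < f x}

/-- The convex combination (Minkowski sum) `∑ i, l i • S i` of the sets `S i`. -/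
def combSlices {X : Type*} [NormedAddCommGroup X] [NormedSpace ℝ X]
    {n : ℕ} (l : Fin n → ℝ) (S : Fin n → Set X) : Set X :=
  {x | ∃ v : Fin n → X, (∀ i, v i ∈ S i) ∧ x = ∑ i, l i • v i}

/-- The weak topology `σ(X, X*)` on `X`. -/
def weakTopology (X : Type*) [NormedAddCommGroup X] [NormedSpace ℝ X] :
    TopologicalSpace X :=
  ⨅ f : X →L[ℝ] ℝ, TopologicalSpace.induced f inferInstance

/-- The weak-star topology `σ(X*, X)` on the dual `X*` of `X`. -/
def wstarTopology (X : Type*) [NormedAddCommGroup X] [NormedSpace ℝ X] :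
    TopologicalSpace (X →L[ℝ] ℝ) :=
  ⨅ x : X, TopologicalSpace.induced (fun f : X →L[ℝ] ℝ => f x) inferInstance

/-- Ball Dentable Property: the closed unit ball has slices of arbitrarily small diameter. -/
def BDP (X : Type*) [NormedAddCommGroup X] [NormedSpace ℝ X] : Prop :=
  ∀ ε > 0, ∃ (f : X →L[ℝ] ℝ) (α : ℝ), ‖f‖ = 1 ∧ 0 < α ∧
    Metric.diam (ballSlice X f α) < ε

/-- Ball Huskable Property: the closed unit ball has nonempty relatively weakly open
subsets of arbitrarily small diameter. -/
def BHP (X : Type*) [NormedAddCommGroup X] [NormedSpace ℝ X] : Prop :=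
  ∀ ε > 0, ∃ U : Set X, IsOpen[weakTopology X] U ∧
    (U ∩ closedBall (0 : X) 1).Nonempty ∧
    Metric.diam (U ∩ closedBall (0 : X) 1) < ε

/-- Ball Small Combination of Slices Property: the closed unit ball has convex
combinations of slices of arbitrarily small diameter. -/
def BSCSP (X : Type*) [NormedAddCommGroup X] [NormedSpace ℝ X] : Prop :=
  ∀ ε > 0, ∃ (n : ℕ) (f : Fin n → (X →L[ℝ] ℝ)) (α l : Fin n → ℝ),
    (∀ i, ‖f i‖ = 1) ∧ (∀ i, 0 < α i) ∧ (∀ i, 0 ≤ l i) ∧ (∑ i, l i = 1) ∧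
    Metric.diam (combSlices l (fun i => ballSlice X (f i) (α i))) < ε

/-- The weak-star ballSlice of the closed unit ball of `X*` determined by `x ∈ X` and `α`. -/
def wstarSlice (X : Type*) [NormedAddCommGroup X] [NormedSpace ℝ X]
    (x : X) (α : ℝ) : Set (X →L[ℝ] ℝ) :=
  {f ∈ closedBall (0 : X →L[ℝ] ℝ) 1 | 1 - α < f x}

/-- `X*` has the weak-star Ball Dentable Property: the closed unit ball of `X*` has
weak-star slices of arbitrarily small diameter. -/
def wstarBDP (X : Type*) [NormedAddCommGroup X] [NormedSpace ℝ X] : Prop :=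
  ∀ ε > 0, ∃ (x : X) (α : ℝ), ‖x‖ = 1 ∧ 0 < α ∧
    Metric.diam (wstarSlice X x α) < ε

/-- `X*` has the weak-star Ball Huskable Property: the closed unit ball of `X*` has
nonempty relatively weak-star open subsets of arbitrarily small diameter. -/
def wstarBHP (X : Type*) [NormedAddCommGroup X] [NormedSpace ℝ X] : Prop :=
  ∀ ε > 0, ∃ U : Set (X →L[ℝ] ℝ), IsOpen[wstarTopology X] U ∧
    (U ∩ closedBall (0 : X →L[ℝ] ℝ) 1).Nonempty ∧
    Metric.diam (U ∩ closedBall (0 : X →L[ℝ] ℝ) 1) < ε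

/-- `X*` has the weak-star Ball Small Combination of Slices Property: the closed unit
ball of `X*` has convex combinations of weak-star slices of arbitrarily small diameter. -/
def wstarBSCSP (X : Type*) [NormedAddCommGroup X] [NormedSpace ℝ X] : Prop :=
  ∀ ε > 0, ∃ (n : ℕ) (x : Fin n → X) (α l : Fin n → ℝ),
    (∀ i, ‖x i‖ = 1) ∧ (∀ i, 0 < α i) ∧ (∀ i, 0 ≤ l i) ∧ (∑ i, l i = 1) ∧
    Metric.diam (combSlices l (fun i => wstarSlice X (x i) (α i))) < ε

/-- `Y` is an M-ideal in `X`: there is an L-projection on `X*` whose kernel is the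
annihilator of `Y`. -/
def IsMIdeal {X : Type*} [NormedAddCommGroup X] [NormedSpace ℝ X]
    (Y : Subspace ℝ X) : Prop :=
  ∃ P : (X →L[ℝ] ℝ) →L[ℝ] (X →L[ℝ] ℝ),
    (∀ f, P (P f) = P f) ∧
    (∀ f, ‖f‖ = ‖P f‖ + ‖f - P f‖) ∧
    (∀ f, P f = 0 ↔ ∀ y ∈ Y, f y = 0)

/-- `Y` is a strict ideal in `X`: there is a norm-one projection `P` on `X*` with kernel
the annihilator of `Y` whose range has weak-star dense unit ball in the unit ball of `X*`. -/
def IsStrictIdeal {X : Type*} [NormedAddCommGroup X] [NormedSpace ℝ X]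
    (Y : Subspace ℝ X) : Prop :=
  ∃ P : (X →L[ℝ] ℝ) →L[ℝ] (X →L[ℝ] ℝ),
    ‖P‖ = 1 ∧
    (∀ f, P (P f) = P f) ∧
    (∀ f, P f = 0 ↔ ∀ y ∈ Y, f y = 0) ∧
    closedBall (0 : X →L[ℝ] ℝ) 1 ⊆
      @closure _ (wstarTopology X) (Set.range P ∩ closedBall (0 : X →L[ℝ] ℝ) 1)

/-! Pull the slices witnessing the BSCSP of `X` back along the first projection of
`Z = X ⊕_p Y`. If `z` lies in a `β`-slice of `f ∘ fst` with `‖f‖ = 1`, then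
`‖z.fst‖ > 1 - β`, and since `‖z.fst‖ ^ p + ‖z.snd‖ ^ p ≤ 1` with `p < ∞`, the second
coordinate satisfies `‖z.snd‖ ^ p ≤ p β` (Bernoulli). Taking `p β ≤ δ ^ p`, a convex
combination of the pulled-back slices is, up to a `Y`-part of norm at most `δ`, a convex
combination of the original slices, so its diameter exceeds theirs by at most `2δ`. The case of `Y` follows through the
isometry `X ⊕_p Y ≅ Y ⊕_p X`. -/

section CombSlices

variable {E F : Type*} [NormedAddCommGroup E] [NormedSpace ℝ E]
  [NormedAddCommGroup F] [NormedSpace ℝ F] {n : ℕ} {l : Fin n → ℝ}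

lemma combSlices_subset_of_convex {S : Fin n → Set E} {C : Set E} (hC : Convex ℝ C)
    (hl : ∀ i, 0 ≤ l i) (hl1 : ∑ i, l i = 1) (hS : ∀ i, S i ⊆ C) :
    combSlices l S ⊆ C := by
  rintro _ ⟨v, hv, rfl⟩
  exact hC.sum_mem (fun i _ => hl i) hl1 fun i _ => hS i (hv i)

lemma map_mem_combSlices (g : E →ₗ[ℝ] F) {S : Fin n → Set E} {T : Fin n → Set F}
    (hST : ∀ i, Set.MapsTo g (S i) (T i)) {x : E} (hx : x ∈ combSlices l S) :
    g x ∈ combSlices l T := by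
  obtain ⟨v, hv, rfl⟩ := hx
  exact ⟨fun i => g (v i), fun i => hST i (hv i), by simp only [map_sum, map_smul]⟩

lemma isBounded_combSlices_ballSlice (hl : ∀ i, 0 ≤ l i) (hl1 : ∑ i, l i = 1)
    (f : Fin n → (E →L[ℝ] ℝ)) (α : Fin n → ℝ) :
    Bornology.IsBounded (combSlices l fun i => ballSlice E (f i) (α i)) :=
  isBounded_closedBall.subset <|
    combSlices_subset_of_convex (convex_closedBall 0 1) hl hl1 fun _ _ hx => hx.1

end CombSlices

section BallSlice

variable {E F : Type*} [NormedAddCommGroup E] [NormedSpace ℝ E]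
  [NormedAddCommGroup F] [NormedSpace ℝ F]

lemma ballSlice_mono (f : E →L[ℝ] ℝ) {α α' : ℝ} (h : α ≤ α') :
    ballSlice E f α ⊆ ballSlice E f α' :=
  fun _ hx => ⟨hx.1, by linarith [hx.2]⟩

lemma mapsTo_ballSlice_comp (T : E →L[ℝ] F) (hT : ‖T‖ ≤ 1) (f : F →L[ℝ] ℝ) (α : ℝ) :
    Set.MapsTo T (ballSlice E (f.comp T) α) (ballSlice F f α) := by
  intro x ⟨hx, hfx⟩
  refine ⟨?_, hfx⟩
  rw [mem_closedBall_zero_iff] at hx ⊢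
  calc ‖T x‖ ≤ ‖T‖ * ‖x‖ := T.le_opNorm x
    _ ≤ 1 * 1 := by gcongr
    _ = 1 := one_mul 1

end BallSlice

theorem BSCSP.of_linearIsometryEquiv {E F : Type*} [NormedAddCommGroup E] [NormedSpace ℝ E]
    [NormedAddCommGroup F] [NormedSpace ℝ F] (e : E ≃ₗᵢ[ℝ] F) (h : BSCSP E) : BSCSP F := by
  intro ε hε
  obtain ⟨n, f, α, l, hf, hα, hl, hl1, hd⟩ := h ε hε
  let e' : F →L[ℝ] E := e.symm.toLinearIsometry.toContinuousLinearMap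
  refine ⟨n, fun i => (f i).comp e', α, l,
    fun i => (f i).opNorm_comp_linearIsometryEquiv e.symm ▸ hf i, hα, hl, hl1, ?_⟩
  have hsub : (combSlices l fun i => ballSlice F ((f i).comp e') (α i)) ⊆
      e '' combSlices l fun i => ballSlice E (f i) (α i) := fun x hx =>
    ⟨e.symm x, map_mem_combSlices e.symm.toLinearEquiv.toLinearMap (fun i =>
      mapsTo_ballSlice_comp e' e.symm.toLinearIsometry.norm_toContinuousLinearMap_le (f i) (α i))
      hx, e.apply_symm_apply x⟩
  calc _ ≤ diam (e '' combSlices l fun i => ballSlice E (f i) (α i)) :=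
        diam_mono hsub (e.lipschitz.isBounded_image (isBounded_combSlices_ballSlice hl hl1 f α))
    _ < ε := e.isometry.diam_image _ ▸ hd

namespace WithLp

variable {X Y : Type*} [NormedAddCommGroup X] [NormedAddCommGroup Y] {p : ℝ≥0∞} [Fact (1 ≤ p)]

lemma norm_rpow_eq_add (hp : p ≠ ⊤) (z : WithLp p (X × Y)) :
    ‖z‖ ^ p.toReal = ‖z.fst‖ ^ p.toReal + ‖z.snd‖ ^ p.toReal := by
  have hq : 0 < p.toReal := ENNReal.toReal_pos (zero_lt_one.trans_le Fact.out).ne' hp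
  rw [prod_norm_eq_add hq, one_div, Real.rpow_inv_rpow (by positivity) hq.ne']

lemma norm_le_norm_fst_add_norm_snd (z : WithLp p (X × Y)) : ‖z‖ ≤ ‖z.fst‖ + ‖z.snd‖ :=
  calc ‖z‖ = ‖toLp p (z.fst, (0 : Y)) + toLp p ((0 : X), z.snd)‖ := by
        rw [← toLp_add, Prod.mk_add_mk, add_zero, zero_add]; rfl
    _ ≤ ‖z.fst‖ + ‖z.snd‖ := (norm_add_le _ _).trans_eq (by rw [norm_toLp_fst, norm_toLp_snd])

variable [NormedSpace ℝ X] [NormedSpace ℝ Y]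

lemma norm_fstL_le : ‖fstL p ℝ X Y‖ ≤ 1 :=
  (fstL p ℝ X Y).opNorm_le_bound zero_le_one fun z => (one_mul ‖z‖).symm ▸ norm_fst_le _ z

lemma norm_comp_fstL {G : Type*} [NormedAddCommGroup G] [NormedSpace ℝ G] (f : X →L[ℝ] G) :
    ‖f.comp (fstL p ℝ X Y)‖ = ‖f‖ :=
  le_antisymm ((f.opNorm_comp_le _).trans (mul_le_of_le_one_right (norm_nonneg f) norm_fstL_le))
    (f.opNorm_le_bound (norm_nonneg _) fun x => by
      simpa using (f.comp (fstL p ℝ X Y)).le_opNorm (toLp p (x, (0 : Y))))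

end WithLp

section WithLpProd

open WithLp

variable {X Y : Type*} [NormedAddCommGroup X] [NormedSpace ℝ X]
  [NormedAddCommGroup Y] [NormedSpace ℝ Y] {p : ℝ≥0∞} [Fact (1 ≤ p)]

lemma norm_snd_rpow_le_of_mem_ballSlice (hp : p ≠ ⊤) {f : X →L[ℝ] ℝ} (hf : ‖f‖ ≤ 1)
    {β : ℝ} (hβ : β ≤ 1) {z : WithLp p (X × Y)}
    (hz : z ∈ ballSlice _ (f.comp (fstL p ℝ X Y)) β) :
    ‖z.snd‖ ^ p.toReal ≤ p.toReal * β := by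
  obtain ⟨hz, hfz⟩ := hz
  rw [mem_closedBall_zero_iff] at hz
  have hq : 1 ≤ p.toReal := ENNReal.toReal_one ▸ ENNReal.toReal_mono hp Fact.out
  have hfst : 1 - β ≤ ‖z.fst‖ :=
    calc 1 - β ≤ f z.fst := hfz.le
      _ ≤ ‖f‖ * ‖z.fst‖ := (le_abs_self _).trans (f.le_opNorm _)
      _ ≤ ‖z.fst‖ := mul_le_of_le_one_left (norm_nonneg _) hf
  have bernoulli : 1 - p.toReal * β ≤ (1 - β) ^ p.toReal := by
    simpa [sub_eq_add_neg] using one_add_mul_self_le_rpow_one_add (s := -β) (by linarith) hq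
  have hfst_rpow : (1 - β) ^ p.toReal ≤ ‖z.fst‖ ^ p.toReal :=
    Real.rpow_le_rpow (by linarith) hfst (by linarith)
  have hz_rpow : ‖z‖ ^ p.toReal ≤ 1 := Real.rpow_le_one (norm_nonneg _) hz (by linarith)
  linarith [norm_rpow_eq_add hp z]

lemma diam_combSlices_withLpProd_le {n : ℕ} {l : Fin n → ℝ} (hl : ∀ i, 0 ≤ l i)
    (hl1 : ∑ i, l i = 1) {A : Fin n → Set (WithLp p (X × Y))} {B : Fin n → Set X} {δ : ℝ}
    (hδ : 0 ≤ δ) (hAB : ∀ i, Set.MapsTo WithLp.fst (A i) (B i))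
    (hA : ∀ i, Set.MapsTo WithLp.snd (A i) (closedBall 0 δ))
    (hB : Bornology.IsBounded (combSlices l B)) :
    diam (combSlices l A) ≤ diam (combSlices l B) + 2 * δ := by
  have hfst : ∀ z ∈ combSlices l A, z.fst ∈ combSlices l B := fun z hz =>
    map_mem_combSlices (fstₗ p ℝ X Y) hAB hz
  have hsnd : ∀ z ∈ combSlices l A, ‖z.snd‖ ≤ δ := fun z hz =>
    mem_closedBall_zero_iff.1 <| combSlices_subset_of_convex (convex_closedBall 0 δ) hl hl1
      (fun _ => subset_rfl) (map_mem_combSlices (sndₗ p ℝ X Y) hA hz)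
  refine diam_le_of_forall_dist_le (by positivity) fun z hz z' hz' => ?_
  calc dist z z' = ‖z - z'‖ := dist_eq_norm z z'
    _ ≤ ‖z.fst - z'.fst‖ + ‖z.snd - z'.snd‖ := norm_le_norm_fst_add_norm_snd (z - z')
    _ ≤ diam (combSlices l B) + (δ + δ) := by
        gcongr
        · rw [← dist_eq_norm]
          exact dist_le_diam_of_mem hB (hfst z hz) (hfst z' hz')
        · exact (norm_sub_le _ _).trans (add_le_add (hsnd z hz) (hsnd z' hz'))
    _ = diam (combSlices l B) + 2 * δ := by ring

theorem BSCSP.withLpProd_left (hp : p ≠ ⊤) (hX : BSCSP X) : BSCSP (WithLp p (X × Y)) := by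
  intro ε hε
  obtain ⟨n, f, α, l, hf, hα, hl, hl1, hd⟩ := hX (ε / 2) (half_pos hε)
  have hq : 0 < p.toReal := ENNReal.toReal_pos (zero_lt_one.trans_le Fact.out).ne' hp
  obtain ⟨δ, hδ, hδε⟩ : ∃ δ : ℝ, 0 < δ ∧ 2 * δ = ε / 2 := ⟨ε / 4, by positivity, by ring⟩
  let β : Fin n → ℝ := fun i => min (α i) (min 1 (δ ^ p.toReal / p.toReal))
  refine ⟨n, fun i => (f i).comp (fstL p ℝ X Y), β, l, fun i => (norm_comp_fstL _).trans (hf i),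
    fun i => lt_min (hα i) (lt_min one_pos (by positivity)), hl, hl1, ?_⟩
  have hfst (i : Fin n) : Set.MapsTo WithLp.fst (ballSlice _ ((f i).comp (fstL p ℝ X Y)) (β i))
      (ballSlice X (f i) (α i)) :=
    fun _ hz => ballSlice_mono (f i) (min_le_left _ _)
      (mapsTo_ballSlice_comp (fstL p ℝ X Y) norm_fstL_le (f i) (β i) hz)
  have hsnd (i : Fin n) : Set.MapsTo WithLp.snd
      (ballSlice _ ((f i).comp (fstL p ℝ X Y)) (β i)) (closedBall 0 δ) := fun z hz => by
    rw [mem_closedBall_zero_iff, ← Real.rpow_le_rpow_iff (norm_nonneg _) hδ.le hq]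
    calc ‖z.snd‖ ^ p.toReal ≤ p.toReal * β i :=
          norm_snd_rpow_le_of_mem_ballSlice hp (hf i).le
            ((min_le_right _ _).trans (min_le_left _ _)) hz
      _ ≤ p.toReal * (δ ^ p.toReal / p.toReal) := by
          gcongr
          exact (min_le_right _ _).trans (min_le_right _ _)
      _ = δ ^ p.toReal := by field_simp
  calc _ ≤ diam (combSlices l fun i => ballSlice X (f i) (α i)) + 2 * δ :=
        diam_combSlices_withLpProd_le hl hl1 hδ.le hfst hsnd
          (isBounded_combSlices_ballSlice hl hl1 f α)
    _ < ε := by linarith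

end WithLpProd

theorem bscsp_prod_lp_general (X Y : Type*)
    [NormedAddCommGroup X] [NormedSpace ℝ X]
    [NormedAddCommGroup Y] [NormedSpace ℝ Y]
    (p : ℝ≥0∞) [Fact (1 ≤ p)] (hp : p ≠ ⊤)
    (h : BSCSP X ∨ BSCSP Y) :
    BSCSP (WithLp p (X × Y)) := by
  rcases h with hX | hY
  · exact BSCSP.withLpProd_left hp hX
  · exact (BSCSP.withLpProd_left hp hY).of_linearIsometryEquiv
      (LinearIsometryEquiv.withLpProdComm p ℝ Y X)

/-- If `X` or `Y` has the Ball Small Combination of Slices Property, then so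
does `Z = X ⊕_p Y` (`1 ≤ p < ∞`). -/
theorem bscsp_prod_lp (X Y : Type*)
    [NormedAddCommGroup X] [NormedSpace ℝ X] [CompleteSpace X]
    [NormedAddCommGroup Y] [NormedSpace ℝ Y] [CompleteSpace Y]
    (p : ℝ≥0∞) [Fact (1 ≤ p)] (hp : p ≠ ⊤)
    (h : BSCSP X ∨ BSCSP Y) :
    BSCSP (WithLp p (X × Y)) :=
  bscsp_prod_lp_general X Y p hp h
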